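/- arXiv:0805.3350 — 2 statements merged into one kernel-verified Lean document; each statement's English description precedes it below -/
import Mathlib

section
/- Let C be any category and A : Δ_* ⥤ C a functor. Then the object A([−1]_*), together with the maps A([−1]_*) → A([n]_*) induced by the unique morphisms [−1]_* → [n]_* for n ≥ 0, is a limit cone over the cosimplicial object obtained by restricting A to the simplex category Δ (the full subcategory of Δ_* on the objects [n]_* with n ≥ 0 and the morphisms that send no non-basepoint element to the basepoint). -/
/-!
The category `Δ_*` of pointed ordered sets `[n]_* = {0, …, n} ⊔ {*}` for
`n ∈ {-1, 0, 1, …}`, with basepoint `*` as greatest element and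
order-preserving basepoint-preserving maps.  The object `⟨k⟩ : DeltaStar`
represents `[k - 1]_*`, realized as `Fin (k + 1)` with basepoint the top
element; so `⟨0⟩` is `[-1]_*` and `⟨n + 1⟩` is `[n]_*`.

The simplex category `Δ` embeds into `Δ_*` by `[n] ↦ [n]_*`, a monotone map
`f : [n] → [m]` being extended by `* ↦ *`; under this embedding the image
morphisms are exactly those under which the preimage of the basepoint is the
basepoint.
-/

open CategoryTheory

/-- Objects of `Δ_*`: the object `⟨k⟩` represents `[k - 1]_*`. -/
structure DeltaStar : Type where
  len : ℕ

namespace DeltaStar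

/-- Morphisms are order-preserving maps sending the basepoint (the top
element) to the basepoint. -/
instance : Category DeltaStar where
  Hom X Y := { f : Fin (X.len + 1) →o Fin (Y.len + 1) // f (Fin.last X.len) = Fin.last Y.len }
  id X := ⟨OrderHom.id, rfl⟩
  comp f g := ⟨g.1.comp f.1, by
    show g.1 (f.1 _) = _
    rw [f.2, g.2]⟩
  id_comp f := Subtype.ext (OrderHom.comp_id f.1)
  comp_id f := Subtype.ext (OrderHom.id_comp f.1)
  assoc f g h := Subtype.ext rfl

/-- Extension of a monotone map `[n] → [m]` to a pointed monotone map
`[n]_* → [m]_*` sending the basepoint to the basepoint. -/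
def extendFun {n m : ℕ} (f : Fin (n + 1) →o Fin (m + 1)) :
    Fin (n + 2) →o Fin (m + 2) where
  toFun i := if h : i.val < n + 1 then (f ⟨i.val, h⟩).castSucc else Fin.last (m + 1)
  monotone' := by
    intro a b hab
    have hab' : (a : ℕ) ≤ b := hab
    dsimp only
    split_ifs with ha hb hb
    · exact Fin.castSucc_le_castSucc_iff.mpr
        (f.monotone (show (⟨a.val, ha⟩ : Fin (n + 1)) ≤ ⟨b.val, hb⟩ from hab'))
    · exact Fin.le_last _
    · omega
    · exact le_refl _

lemma extendFun_of_lt {n m : ℕ} (f : Fin (n + 1) →o Fin (m + 1)) (i : Fin (n + 2))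
    (h : i.val < n + 1) : extendFun f i = (f ⟨i.val, h⟩).castSucc := dif_pos h

lemma extendFun_of_not_lt {n m : ℕ} (f : Fin (n + 1) →o Fin (m + 1)) (i : Fin (n + 2))
    (h : ¬ i.val < n + 1) : extendFun f i = Fin.last (m + 1) := dif_neg h

lemma extendFun_id {n : ℕ} :
    extendFun (OrderHom.id : Fin (n + 1) →o Fin (n + 1)) = OrderHom.id := by
  apply OrderHom.ext
  funext i
  by_cases h : i.val < n + 1
  · rw [extendFun_of_lt _ i h]
    exact Fin.ext (by simp)
  · rw [extendFun_of_not_lt _ i h]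
    have := i.isLt
    exact Fin.ext (by simp only [Fin.val_last, OrderHom.id_coe, id_eq]; omega)

lemma extendFun_comp {n m l : ℕ} (f : Fin (n + 1) →o Fin (m + 1))
    (g : Fin (m + 1) →o Fin (l + 1)) :
    extendFun (g.comp f) = (extendFun g).comp (extendFun f) := by
  apply OrderHom.ext
  funext i
  simp only [OrderHom.comp_coe, Function.comp_apply]
  by_cases h : i.val < n + 1
  · rw [extendFun_of_lt _ i h, extendFun_of_lt f i h,
      extendFun_of_lt g _ (by simp; have := (f ⟨i.val, h⟩).isLt; omega)]
    simp only [OrderHom.comp_coe, Function.comp_apply]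
    exact congrArg Fin.castSucc (congrArg (⇑g) (Fin.ext (by simp)))
  · rw [extendFun_of_not_lt _ i h, extendFun_of_not_lt f i h,
      extendFun_of_not_lt g _ (by simp)]

/-- The embedding `Δ ⥤ Δ_*`, sending `[n]` to `[n]_*` (the object `⟨n + 1⟩`
in our indexing) and a monotone map `f : [n] → [m]` to its extension fixing
the basepoint. -/
def emb : SimplexCategory ⥤ DeltaStar where
  obj n := ⟨n.len + 1⟩
  map {n m} f := ⟨extendFun f.toOrderHom, extendFun_of_not_lt _ _ (by simp)⟩
  map_id n := Subtype.ext (by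
    show extendFun (SimplexCategory.Hom.toOrderHom (𝟙 n)) = OrderHom.id
    rw [SimplexCategory.id_toOrderHom, extendFun_id])
  map_comp {n m l} f g := Subtype.ext (by
    show extendFun (SimplexCategory.Hom.toOrderHom (f ≫ g)) = _
    rw [SimplexCategory.comp_toOrderHom, extendFun_comp]
    rfl)

/-- The unique morphism `[-1]_* → [n]_*` in `Δ_*`. -/
def fromNegOne (n : SimplexCategory) : (⟨0⟩ : DeltaStar) ⟶ emb.obj n :=
  ⟨⟨fun _ => Fin.last (n.len + 1), monotone_const⟩, rfl⟩

lemma fromNegOne_naturality {n m : SimplexCategory} (f : n ⟶ m) :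
    fromNegOne n ≫ emb.map f = fromNegOne m := by
  apply Subtype.ext
  apply OrderHom.ext
  funext i
  show (emb.map f).1 (Fin.last (n.len + 1)) = Fin.last (m.len + 1)
  exact (emb.map f).2

variable {C : Type*} [Category C]

/-- The cone over the cosimplicial object `A|_Δ = emb ⋙ A` with apex
`A([-1]_*)`, whose legs are induced by the unique morphisms
`[-1]_* → [n]_*`. -/
def negOneCone (A : DeltaStar ⥤ C) : Limits.Cone (emb ⋙ A) where
  pt := A.obj ⟨0⟩
  π :=
    { app := fun n => A.map (fromNegOne n)
      naturality := fun n m f => by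
        dsimp
        rw [Category.id_comp, ← A.map_comp, fromNegOne_naturality] }

end DeltaStar

/-!
In `Δ_*` the diagram `[-1]_* → [0]_* ⇉ [1]_*` (the images of `δ⁰, δ¹`) is a split equalizer:
`[0]_* → [-1]_*` retracts the first map, and `[1]_* → [0]_*` collapsing `1` onto `*` retracts
`δ¹` and turns `δ⁰` into the constant map. Split equalizers are preserved by every functor, so
`A([-1]_*)` is the equalizer of `A(δ⁰), A(δ¹) : A([0]_*) ⇉ A([1]_*)`; and the limit of any
cosimplicial object is the equalizer of its two cofaces `X⦋0⦌ ⇉ X⦋1⦌`.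
-/

namespace CategoryTheory.Limits

open Simplicial

variable {C : Type*} [Category C] {X : SimplexCategory ⥤ C}

def Cone.forkAtZero (c : Cone X) :
    Fork (X.map (SimplexCategory.δ 0 : ⦋0⦌ ⟶ ⦋1⦌)) (X.map (SimplexCategory.δ 1)) :=
  Fork.ofι (c.π.app ⦋0⦌) ((c.w _).trans (c.w _).symm)

/-- Every `⦋n⦌` receives a map from `⦋0⦌`, so a cone over `X` is determined by its leg at `⦋0⦌`. -/
def isLimitOfIsLimitForkAtZero {c : Cone X} (h : IsLimit c.forkAtZero) : IsLimit c where
  lift s := Fork.IsLimit.lift h (s.π.app ⦋0⦌) ((s.w _).trans (s.w _).symm)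
  fac s n := by
    rw [← c.w (SimplexCategory.const ⦋0⦌ n 0), ← s.w (SimplexCategory.const ⦋0⦌ n 0)]
    exact (Category.assoc _ _ _).symm.trans (congrArg (· ≫ _) (Fork.IsLimit.lift_ι' h _ _))
  uniq s m hm := Fork.IsLimit.hom_ext h ((hm ⦋0⦌).trans (Fork.IsLimit.lift_ι' h _ _).symm)

end CategoryTheory.Limits

namespace DeltaStar

open Simplicial

lemma hom_ext {X Y : DeltaStar} {f g : X ⟶ Y} (h : ∀ i, f.1 i = g.1 i) : f = g :=
  Subtype.ext (OrderHom.ext _ _ (funext h))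

def toNegOne : emb.obj ⦋0⦌ ⟶ (⟨0⟩ : DeltaStar) :=
  ⟨⟨fun _ => 0, monotone_const⟩, rfl⟩

def isSplitEqualizerFromNegOne :
    IsSplitEqualizer (emb.map (SimplexCategory.δ 0)) (emb.map (SimplexCategory.δ 1))
      (fromNegOne ⦋0⦌) where
  leftRetraction := toNegOne
  rightRetraction := ⟨⟨fun i => Fin.clamp i.val 1, fun _ _ h => min_le_min_right 1 h⟩, rfl⟩
  condition := by rw [fromNegOne_naturality, fromNegOne_naturality]
  ι_leftRetraction := hom_ext fun i => by fin_cases i; rfl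
  bottom_rightRetraction := hom_ext fun i => by fin_cases i <;> rfl
  top_rightRetraction := hom_ext fun i => by fin_cases i <;> rfl

end DeltaStar

open DeltaStar in
/-- For any `Δ_*`-diagram `A` in any category `C`, the object `A([-1]_*)`,
together with the maps to `A([n]_*)` induced by the unique morphisms
`[-1]_* → [n]_*` for `n ≥ 0`, is a limit cone over the cosimplicial object
obtained by restricting `A` along the embedding `Δ ⥤ Δ_*`. -/
theorem deltaStar_negOne_isLimit {C : Type*} [Category C] (A : DeltaStar ⥤ C) :
    Nonempty (Limits.IsLimit (negOneCone A)) :=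
  ⟨Limits.isLimitOfIsLimitForkAtZero (isSplitEqualizerFromNegOne.map A).isEqualizer⟩
end

section
/- Let C and D be monoidal categories, F : C ⥤ D a strong monoidal functor admitting a right adjoint G : D ⥤ C, and suppose given an isomorphism α_{X,d} : G(F(X) ⊗ d) ≅ X ⊗ G(d), natural in X ∈ C and in d ∈ D (i.e. G is a C-module functor). Let u : E ⟶ E' be a morphism in C that is homologically phantom, meaning that for every object c of C the map Hom_C(𝟙_C, E ⊗ c) → Hom_C(𝟙_C, E' ⊗ c) given by postcomposition with u ⊗ id_c is zero. Then F(u) is homologically phantom in D: for every object d of D, the map Hom_D(𝟙_D, F(E) ⊗ d) → Hom_D(𝟙_D, F(E') ⊗ d) given by postcomposition with F(u) ⊗ id_d is zero. -/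
/-!
Transposing along `F ⊣ G` identifies maps `𝟙_D ≅ F(𝟙_C) ⟶ F(E) ⊗ d` with maps `𝟙_C ⟶ G(F(E) ⊗ d)`,
and turns postcomposition with `F(u) ▷ d` into postcomposition with `G(F(u) ▷ d)`. Via the module
structure `G(F(X) ⊗ d) ≅ X ⊗ G(d)` the latter is conjugate to `u ▷ G(d)`, which kills every map out
of `𝟙_C` because `u` is phantom.
-/

open CategoryTheory MonoidalCategory Limits

namespace CategoryTheory.Adjunction

variable {C D : Type*} [Category C] [Category D] [HasZeroMorphisms C] [HasZeroMorphisms D]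
  {F : C ⥤ D} {G : D ⥤ C}

theorem comp_eq_zero_of_forall_comp_map_eq_zero (adj : F ⊣ G) {c : C} {X Y : D} {φ : X ⟶ Y}
    (h : ∀ f : c ⟶ G.obj X, f ≫ G.map φ = 0) (g : F.obj c ⟶ X) : g ≫ φ = 0 := by
  apply (adj.homEquiv c Y).injective
  -- `G` need not preserve zero morphisms, so compare with the transpose of `0` instead.
  rw [adj.homEquiv_naturality_right, h, ← h (adj.homEquiv c X 0),
    ← adj.homEquiv_naturality_right, zero_comp]

end CategoryTheory.Adjunction

theorem monoidal_leftAdjoint_preserves_homological_phantom_general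
    {C D : Type*} [Category C] [Category D]
    [MonoidalCategory C] [MonoidalCategory D]
    [Limits.HasZeroMorphisms C] [Limits.HasZeroMorphisms D]
    (F : C ⥤ D) [F.Monoidal] (G : D ⥤ C) (adj : F ⊣ G)
    (α : ∀ (X : C) (d : D), G.obj (F.obj X ⊗ d) ≅ X ⊗ G.obj d)
    (natX : ∀ {X X' : C} (f : X ⟶ X') (d : D),
      G.map (F.map f ▷ d) ≫ (α X' d).hom = (α X d).hom ≫ (f ▷ G.obj d))
    {E E' : C} (u : E ⟶ E')
    (hu : ∀ (c : C) (g : 𝟙_ C ⟶ E ⊗ c), g ≫ (u ▷ c) = 0) :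
    ∀ (d : D) (g : 𝟙_ D ⟶ F.obj E ⊗ d), g ≫ (F.map u ▷ d) = 0 := by
  intro d g
  have hG : G.map (F.map u ▷ d) = (α E d).hom ≫ (u ▷ G.obj d) ≫ (α E' d).inv := by
    rw [← Category.assoc, Iso.eq_comp_inv, natX]
  have hε : (Functor.Monoidal.εIso F).inv ≫ g ≫ F.map u ▷ d = 0 := by
    rw [← Category.assoc]
    refine adj.comp_eq_zero_of_forall_comp_map_eq_zero (fun f => ?_) _
    rw [hG, ← Category.assoc, ← Category.assoc, hu, zero_comp]
  rw [(Iso.inv_comp_eq _).1 hε, comp_zero]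

/-- Let `F : C ⥤ D` be a strong monoidal functor between monoidal categories
(with zero morphisms) admitting a right adjoint `G`, and suppose given an
isomorphism `α_{X,d} : G(F(X) ⊗ d) ≅ X ⊗ G(d)` natural in `X ∈ C` and
`d ∈ D`, i.e. `G` is a `C`-module functor.  If `u : E ⟶ E'` in `C` is
homologically phantom — for every object `c` of `C`, postcomposition with
`u ⊗ id_c` is the zero map `Hom(𝟙_C, E ⊗ c) → Hom(𝟙_C, E' ⊗ c)` — then
`F(u)` is homologically phantom in `D`: for every object `d` of `D`,
postcomposition with `F(u) ⊗ id_d` is the zero map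
`Hom(𝟙_D, F(E) ⊗ d) → Hom(𝟙_D, F(E') ⊗ d)`. -/
theorem monoidal_leftAdjoint_preserves_homological_phantom
    {C D : Type*} [Category C] [Category D]
    [MonoidalCategory C] [MonoidalCategory D]
    [Limits.HasZeroMorphisms C] [Limits.HasZeroMorphisms D]
    (F : C ⥤ D) [F.Monoidal] (G : D ⥤ C) (adj : F ⊣ G)
    (α : ∀ (X : C) (d : D), G.obj (F.obj X ⊗ d) ≅ X ⊗ G.obj d)
    (natX : ∀ {X X' : C} (f : X ⟶ X') (d : D),
      G.map (F.map f ▷ d) ≫ (α X' d).hom = (α X d).hom ≫ (f ▷ G.obj d))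
    (natd : ∀ (X : C) {d d' : D} (k : d ⟶ d'),
      G.map (F.obj X ◁ k) ≫ (α X d').hom = (α X d).hom ≫ (X ◁ G.map k))
    {E E' : C} (u : E ⟶ E')
    (hu : ∀ (c : C) (g : 𝟙_ C ⟶ E ⊗ c), g ≫ (u ▷ c) = 0) :
    ∀ (d : D) (g : 𝟙_ D ⟶ F.obj E ⊗ d), g ≫ (F.map u ▷ d) = 0 :=
  monoidal_leftAdjoint_preserves_homological_phantom_general F G adj α natX u hu
end
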